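/- Every quiddity cycle is one of (0,0), (1,1,1), (1,2,1,2), or contains one of the following 12 sequences: (1,2,2), (1,2,3,1), (1,2,3,2,1), (1,2,4,1,2), (1,2,4,1,3,1), (1,3,1,3), (1,3,1,4,1), (1,3,1,5,1,2), (1,3,1,5,1,3,1), (1,4,1,2), (2,1,3), (2,1,5,1,2). -/

import Mathlib

/-!
The conclusion is invariant under the dihedral action, so it suffices to follow one growth step
`(a, b, t) ↦ (a + 1, 1, b + 1, t)`. The exceptional cycles grow into one another,
`(0,0) ↦ (1,1,1) ↦ (1,2,1,2)`, and every growth of `(1,2,1,2)` contains `(2,1,3)` or `(1,2,2)`.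
An occurrence of a pattern in the old cycle either avoids the edge `(a, b)`, and then survives,
or it meets the edge; in the latter case the corresponding window of the new cycle contains a
pattern, which is a finite check over the twelve patterns. The one failure of that check is
`(2,1,3)` filling the whole cycle `(3,2,1)`, and this is not a quiddity cycle: a quiddity cycle
of length `n` has entry sum `3n - 6`.
-/

/-- One generating move of the dihedral action on finite sequences:
cyclic rotation by one, or reversal. -/
def dihStep (c d : List ℕ) : Prop := d = c.rotate 1 ∨ d = c.reverse

/-- The equivalence relation on finite sequences generated by cyclic
rotations and reversal (the dihedral group action). -/
def DihEquiv : List ℕ → List ℕ → Prop := Relation.EqvGen dihStep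

/-- The lists that are representatives of quiddity cycles: the smallest
dihedrally closed collection containing `(0,0)` and closed under the rule
`(c₁,…,cₙ) ↦ (c₁+1, 1, c₂+1, c₃, …, cₙ)`. -/
inductive IsQuiddity : List ℕ → Prop
  | base : IsQuiddity [0, 0]
  | dih {c d : List ℕ} : IsQuiddity c → dihStep c d → IsQuiddity d
  | grow {a b : ℕ} {t : List ℕ} : IsQuiddity (a :: b :: t) →
      IsQuiddity ((a + 1) :: 1 :: (b + 1) :: t)

/-- The (class of the) cycle `c` contains the finite sequence `d`:
some representative of `c` has `d` as a block of consecutive entries. -/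
def CycContains (c d : List ℕ) : Prop := ∃ c', DihEquiv c c' ∧ d <:+: c'

open List

def patterns : List (List ℕ) :=
  [[1,2,2], [1,2,3,1], [1,2,3,2,1], [1,2,4,1,2], [1,2,4,1,3,1],
   [1,3,1,3], [1,3,1,4,1], [1,3,1,5,1,2], [1,3,1,5,1,3,1],
   [1,4,1,2], [2,1,3], [2,1,5,1,2]]

def grow : List ℕ → List ℕ
  | a :: b :: t => (a + 1) :: 1 :: (b + 1) :: t
  | l => l

def ContainsPattern (c : List ℕ) : Prop := ∃ f ∈ patterns, CycContains c f

def HasPatternInfix (w : List ℕ) : Prop := ∃ f ∈ patterns, f <:+: w ∨ f <:+: w.reverse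

def dihedralOrbit (c : List ℕ) : List (List ℕ) :=
  c.cyclicPermutations ++ c.reverse.cyclicPermutations

namespace DihEquiv

theorem refl (c : List ℕ) : DihEquiv c c := Relation.EqvGen.refl c

theorem symm {c d : List ℕ} (h : DihEquiv c d) : DihEquiv d c := Relation.EqvGen.symm _ _ h

theorem trans {c d e : List ℕ} (h₁ : DihEquiv c d) (h₂ : DihEquiv d e) : DihEquiv c e :=
  Relation.EqvGen.trans _ _ _ h₁ h₂

theorem of_dihStep {c d : List ℕ} (h : dihStep c d) : DihEquiv c d := Relation.EqvGen.rel _ _ h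

theorem reverse (c : List ℕ) : DihEquiv c c.reverse := of_dihStep (Or.inr rfl)

theorem rotate (c : List ℕ) (n : ℕ) : DihEquiv c (c.rotate n) := by
  induction n with
  | zero => simpa using refl c
  | succ n ih => simpa [rotate_rotate] using ih.trans (of_dihStep (Or.inl rfl))

end DihEquiv

theorem dihEquiv_iff {c d : List ℕ} : DihEquiv c d ↔ c ~r d ∨ c.reverse ~r d := by
  constructor
  · intro h
    induction h with
    | rel c d h =>
      rcases h with rfl | rfl
      exacts [Or.inl ⟨1, rfl⟩, Or.inr (IsRotated.refl _)]
    | refl c => exact Or.inl (IsRotated.refl c)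
    | symm c d _ ih =>
      rcases ih with h | h
      · exact Or.inl h.symm
      · simpa using Or.inr h.reverse.symm
    | trans c d e _ _ ih₁ ih₂ =>
      rcases ih₁ with h₁ | h₁ <;> rcases ih₂ with h₂ | h₂
      · exact Or.inl (h₁.trans h₂)
      · exact Or.inr (h₁.reverse.trans h₂)
      · exact Or.inr (h₁.trans h₂)
      · simpa using Or.inl (h₁.reverse.trans h₂)
  · rintro (⟨n, rfl⟩ | ⟨n, rfl⟩)
    exacts [DihEquiv.rotate c n, (DihEquiv.reverse c).trans (DihEquiv.rotate _ n)]

theorem mem_dihedralOrbit {c d : List ℕ} : d ∈ dihedralOrbit c ↔ DihEquiv c d := by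
  simp only [dihedralOrbit, mem_append, mem_cyclicPermutations_iff, dihEquiv_iff, isRotated_comm]

instance : DecidableRel DihEquiv := fun _ _ => decidable_of_iff _ mem_dihedralOrbit

theorem cycContains_iff {c f : List ℕ} :
    CycContains c f ↔ ∃ d ∈ dihedralOrbit c, f <:+: d := by
  simp only [CycContains, mem_dihedralOrbit]

instance (c f : List ℕ) : Decidable (CycContains c f) := decidable_of_iff _ cycContains_iff.symm

instance : DecidablePred ContainsPattern := fun c =>
  inferInstanceAs (Decidable (∃ f ∈ patterns, CycContains c f))

instance : DecidablePred HasPatternInfix := fun w =>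
  inferInstanceAs (Decidable (∃ f ∈ patterns, f <:+: w ∨ f <:+: w.reverse))

theorem IsQuiddity.sum_add_six {c : List ℕ} (hc : IsQuiddity c) : c.sum + 6 = 3 * c.length := by
  induction hc with
  | base => rfl
  | dih _ hs ih =>
    rcases hs with rfl | rfl
    · simpa [(rotate_perm _ 1).sum_eq] using ih
    · simpa using ih
  | grow _ ih =>
    simp only [sum_cons, length_cons] at ih ⊢
    omega

theorem ContainsPattern.of_dihEquiv {c d : List ℕ} (h : ContainsPattern d)
    (hcd : DihEquiv c d) : ContainsPattern c := by
  obtain ⟨f, hf, d', hdd', hfd'⟩ := h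
  exact ⟨f, hf, d', hcd.trans hdd', hfd'⟩

theorem HasPatternInfix.containsPattern {c d w : List ℕ} (hw : HasPatternInfix w)
    (hwd : w <:+: d) (hcd : DihEquiv c d) : ContainsPattern c := by
  obtain ⟨f, hf, hfw | hfw⟩ := hw
  · exact ⟨f, hf, d, hcd, hfw.trans hwd⟩
  · exact ⟨f, hf, d.reverse, hcd.trans (.reverse d), hfw.trans (reverse_infix.2 hwd)⟩

theorem dihEquiv_append_comm (l l' : List ℕ) : DihEquiv (l ++ l') (l' ++ l) :=
  dihEquiv_iff.2 (Or.inl isRotated_append)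

theorem dihEquiv_grow_swap (a b : ℕ) (t : List ℕ) :
    DihEquiv (grow (a :: b :: t)) (grow (b :: a :: t.reverse)) :=
  dihEquiv_iff.2 <| Or.inr <| by
    simpa [grow] using isRotated_append (l := t.reverse) (l' := [b + 1, 1, a + 1])

theorem List.infix_or_wraps_of_infix_rotate {α : Type*} {l p : List α} {k : ℕ}
    (h : p <:+: l.rotate k) :
    p <:+: l ∨ ∃ p₁ p₂ m, p₂ ≠ [] ∧ p = p₁ ++ p₂ ∧ l = p₂ ++ m ++ p₁ := by
  rw [rotate_eq_drop_append_take_mod] at h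
  rcases infix_append_iff_ne_nil.1 h with
    h | h | ⟨p₁, p₂, -, hp₂, rfl, ⟨s, hs⟩, ⟨r, hr⟩⟩
  · exact Or.inl (h.trans (drop_suffix _ _).isInfix)
  · exact Or.inl (h.trans (take_prefix _ _).isInfix)
  · refine Or.inr ⟨p₁, p₂, r ++ s, hp₂, rfl, ?_⟩
    rw [← take_append_drop (k % l.length) l, ← hs, ← hr]
    simp

/-- The occurrence of `f` avoids the edge `(a, b)`, crosses it, starts at `b`, ends at `a`, or runs
around the whole cycle from `b` to `a`. -/
theorem List.infix_rotate_cons_cons_cases {α : Type*} {a b : α} {t f : List α} {k : ℕ}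
    (hf : 2 ≤ f.length) (h : f <:+: (a :: b :: t).rotate k) :
    f <:+: t ∨ (∃ x y m, f = x ++ a :: b :: y ∧ t = y ++ m ++ x) ∨
      (∃ y m, f = b :: y ∧ t = y ++ m) ∨ (∃ x m, f = x ++ [a] ∧ t = m ++ x) ∨
      f = b :: t ++ [a] := by
  rcases infix_or_wraps_of_infix_rotate h with ⟨u, v, huv⟩ | ⟨x, p, m, hp, rfl, hl⟩
  · rcases u with _ | ⟨_, _ | ⟨_, u⟩⟩
    · rcases f with _ | ⟨_, _ | ⟨_, y⟩⟩
      · simp at hf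
      · simp at hf
      · simp only [nil_append, cons_append, cons.injEq] at huv
        obtain ⟨rfl, rfl, rfl⟩ := huv
        exact Or.inr (Or.inl ⟨[], y, v, by simp, by simp⟩)
    · rcases f with _ | ⟨_, y⟩
      · simp at hf
      · simp only [cons_append, nil_append, cons.injEq] at huv
        obtain ⟨-, rfl, rfl⟩ := huv
        exact Or.inr (Or.inr (Or.inl ⟨y, v, rfl, rfl⟩))
    · simp only [cons_append, cons.injEq] at huv
      obtain ⟨-, -, rfl⟩ := huv
      exact Or.inl ⟨u, v, rfl⟩
  · rcases p with _ | ⟨_, _ | ⟨_, y⟩⟩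
    · exact absurd rfl hp
    · rcases m with _ | ⟨_, m⟩
      · simp only [cons_append, nil_append, cons.injEq] at hl
        obtain ⟨rfl, rfl⟩ := hl
        simp
      · simp only [cons_append, nil_append, cons.injEq] at hl
        obtain ⟨rfl, rfl, rfl⟩ := hl
        exact Or.inr (Or.inr (Or.inr (Or.inl ⟨x, m, rfl, rfl⟩)))
    · simp only [cons_append, cons.injEq] at hl
      obtain ⟨rfl, rfl, rfl⟩ := hl
      exact Or.inr (Or.inl ⟨x, y, m, rfl, by simp⟩)

theorem two_le_length_of_mem_patterns {f : List ℕ} (hf : f ∈ patterns) : 2 ≤ f.length := by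
  revert f; decide

theorem hasPatternInfix_append_grow {x y : List ℕ} {a b : ℕ}
    (hf : x ++ a :: b :: y ∈ patterns) : HasPatternInfix (x ++ grow (a :: b :: y)) := by
  have key : ∀ f ∈ patterns, ∀ i < f.length,
      HasPatternInfix (f.take i ++ grow (f.drop i)) := by
    decide
  simpa using key _ hf x.length (by simp)

theorem hasPatternInfix_one_cons {b : ℕ} {y : List ℕ} (hf : b :: y ∈ patterns) :
    HasPatternInfix (1 :: (b + 1) :: y) := by
  have key : ∀ f ∈ patterns, HasPatternInfix (1 :: (f.headD 0 + 1) :: f.tail) := by decide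
  exact key _ hf

theorem hasPatternInfix_append_one {x : List ℕ} {a : ℕ} (hf : x ++ [a] ∈ patterns) :
    HasPatternInfix (x ++ [a + 1, 1]) := by
  have key : ∀ f ∈ patterns, HasPatternInfix (f.dropLast ++ [f.getLastD 0 + 1, 1]) := by decide
  simpa [getLastD_concat] using key _ hf

theorem containsPattern_grow_of_isRotated {f c : List ℕ} (hf : f ∈ patterns) (hc : c ~r f)
    (hsum : c.sum + 6 = 3 * c.length) : ContainsPattern (grow c) := by
  have key : ∀ f ∈ patterns, ∀ c ∈ f.cyclicPermutations,
      c.sum + 6 = 3 * c.length → ContainsPattern (grow c) := by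
    decide
  exact key f hf c (mem_cyclicPermutations_iff.2 hc) hsum

theorem containsPattern_grow_of_infix_rotate {a b : ℕ} {t f : List ℕ} {k : ℕ}
    (hsum : (a :: b :: t).sum + 6 = 3 * (a :: b :: t).length) (hf : f ∈ patterns)
    (h : f <:+: (a :: b :: t).rotate k) : ContainsPattern (grow (a :: b :: t)) := by
  rcases infix_rotate_cons_cons_cases (two_le_length_of_mem_patterns hf) h with
    hft | ⟨x, y, m, rfl, rfl⟩ | ⟨y, m, rfl, rfl⟩ | ⟨x, m, rfl, rfl⟩ | rfl
  · exact ⟨f, hf, _, .refl _, hft.trans ⟨[a + 1, 1, b + 1], [], by simp [grow]⟩⟩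
  · refine (hasPatternInfix_append_grow hf).containsPattern (infix_append_left (l₂ := m)) ?_
    simpa [grow] using dihEquiv_append_comm ((a + 1) :: 1 :: (b + 1) :: y ++ m) x
  · exact (hasPatternInfix_one_cons hf).containsPattern
      (infix_cons (prefix_append (1 :: (b + 1) :: y) m).isInfix) (.refl _)
  · refine (hasPatternInfix_append_one hf).containsPattern
      (infix_append_left (l₂ := (b + 1) :: m)) ?_
    simpa [grow] using dihEquiv_append_comm ((a + 1) :: 1 :: (b + 1) :: m) x
  · exact containsPattern_grow_of_isRotated hf ⟨1, by simp⟩ hsum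

theorem containsPattern_grow {a b : ℕ} {t : List ℕ}
    (hsum : (a :: b :: t).sum + 6 = 3 * (a :: b :: t).length) (h : ContainsPattern (a :: b :: t)) :
    ContainsPattern (grow (a :: b :: t)) := by
  obtain ⟨f, hf, c, hc, hfc⟩ := h
  rcases dihEquiv_iff.1 hc with ⟨k, rfl⟩ | hrev
  · exact containsPattern_grow_of_infix_rotate hsum hf hfc
  · have hswap : b :: a :: t.reverse ~r c := by
      rw [show (a :: b :: t).reverse = t.reverse ++ [b, a] by simp] at hrev
      exact isRotated_append.trans hrev
    obtain ⟨k, rfl⟩ := hswap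
    have hsum' : (b :: a :: t.reverse).sum + 6 = 3 * (b :: a :: t.reverse).length := by
      simp only [sum_cons, length_cons, sum_reverse, length_reverse] at hsum ⊢
      omega
    exact (containsPattern_grow_of_infix_rotate hsum' hf hfc).of_dihEquiv (dihEquiv_grow_swap a b t)

theorem dihEquiv_grow_of_dihEquiv_zero_zero {c : List ℕ} (h : DihEquiv c [0, 0]) :
    DihEquiv (grow c) [1, 1, 1] := by
  have key : ∀ c ∈ dihedralOrbit [0, 0], DihEquiv (grow c) [1, 1, 1] := by decide
  exact key c (mem_dihedralOrbit.2 h.symm)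

theorem dihEquiv_grow_of_dihEquiv_one_one_one {c : List ℕ} (h : DihEquiv c [1, 1, 1]) :
    DihEquiv (grow c) [1, 2, 1, 2] := by
  have key : ∀ c ∈ dihedralOrbit [1, 1, 1], DihEquiv (grow c) [1, 2, 1, 2] := by decide
  exact key c (mem_dihedralOrbit.2 h.symm)

theorem containsPattern_grow_of_dihEquiv_one_two_one_two {c : List ℕ}
    (h : DihEquiv c [1, 2, 1, 2]) : ContainsPattern (grow c) := by
  have key : ∀ c ∈ dihedralOrbit [1, 2, 1, 2], ContainsPattern (grow c) := by decide
  exact key c (mem_dihedralOrbit.2 h.symm)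

/-- Every quiddity cycle is `(0,0)`, `(1,1,1)`, `(1,2,1,2)`, or contains one of
the listed 12 sequences. -/
theorem quiddity_contains_twelve (c : List ℕ) (hc : IsQuiddity c) :
    DihEquiv c [0, 0] ∨ DihEquiv c [1, 1, 1] ∨ DihEquiv c [1, 2, 1, 2] ∨
    ∃ f ∈ ([[1,2,2], [1,2,3,1], [1,2,3,2,1], [1,2,4,1,2], [1,2,4,1,3,1],
            [1,3,1,3], [1,3,1,4,1], [1,3,1,5,1,2], [1,3,1,5,1,3,1],
            [1,4,1,2], [2,1,3], [2,1,5,1,2]] : List (List ℕ)),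
      CycContains c f := by
  induction hc with
  | base => exact Or.inl (.refl _)
  | dih _ hs ih =>
    have hdc := (DihEquiv.of_dihStep hs).symm
    rcases ih with h | h | h | h
    exacts [Or.inl (hdc.trans h), Or.inr (Or.inl (hdc.trans h)),
      Or.inr (Or.inr (Or.inl (hdc.trans h))),
      Or.inr (Or.inr (Or.inr (ContainsPattern.of_dihEquiv h hdc)))]
  | grow hq ih =>
    rcases ih with h | h | h | h
    exacts [Or.inr (Or.inl (dihEquiv_grow_of_dihEquiv_zero_zero h)),
      Or.inr (Or.inr (Or.inl (dihEquiv_grow_of_dihEquiv_one_one_one h))),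
      Or.inr (Or.inr (Or.inr (containsPattern_grow_of_dihEquiv_one_two_one_two h))),
      Or.inr (Or.inr (Or.inr (containsPattern_grow hq.sum_add_six h)))]
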